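/- arXiv:1111.5601 — 2 statements merged into one kernel-verified Lean document; each statement's English description precedes it below -/
import Mathlib

section
/- Let k be a field of characteristic 0, A = k[[h]] the ring of formal power series, and N ≥ 1. The group G = {X ∈ GL_N(A) | X ≡ 1 mod h} is residually torsion-free nilpotent; that is, for every g ∈ G with g ≠ 1, there exists a group homomorphism π from G onto a torsion-free nilpotent group Q with π(g) ≠ 1. -/
/-!
Let `Γ(J)` be the kernel of reduction `GL_N(R) → GL_N(R/J)`. From
`⁅u, v⁆ - 1 = ((u - 1)(v - 1) - (v - 1)(u - 1)) u⁻¹ v⁻¹` one gets `⁅Γ(J), Γ(K)⁆ ≤ Γ(JK)`, so the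
`j`-th term of the lower central series of `Γ(I)` lies in `Γ(I^(j+1))` and `Γ(I)/Γ(I^(j+1))` is
nilpotent. If `u ∈ Γ(I^r)`, `r ≥ 1`, then `u^m ≡ 1 + m(u - 1) mod I^(2r)`; when `m` is invertible
this lifts `u^m ∈ Γ(I^(r+1))` to `u ∈ Γ(I^(r+1))`, so over a `ℚ`-algebra these quotients are
torsion-free. For `R = k⟦h⟧` and `I = (h)` Krull's intersection theorem gives `⋂ Γ(I^j) = 1`, so
every `g ≠ 1` survives in one of them.
-/

open Matrix

theorem exists_one_add_pow_eq {α : Type*} [Ring α] (Y : α) (m : ℕ) :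
    ∃ Z, (1 + Y) ^ m = 1 + m * Y + Z * Y ^ 2 := by
  induction m with
  | zero => exact ⟨0, by simp⟩
  | succ m ih =>
    obtain ⟨Z, hZ⟩ := ih
    refine ⟨m + Z + Z * Y, ?_⟩
    rw [pow_succ, hZ, Nat.cast_succ]
    noncomm_ring

theorem Subgroup.isNilpotent_quotient_subgroupOf {G : Type*} [Group G] {S K : Subgroup G}
    [K.Normal] {k : ℕ} (h : S.lowerCentralSeries k ≤ K) :
    Group.IsNilpotent (S ⧸ K.subgroupOf S) := by
  refine Subgroup.nilpotent_iff_lowerCentralSeries.2 ⟨k, ?_⟩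
  rw [← (QuotientGroup.mk' _).range_eq_top_of_surjective (QuotientGroup.mk'_surjective _),
    MonoidHom.range_eq_map, ← Subgroup.map_lowerCentralSeries, Subgroup.map_eq_bot_iff,
    QuotientGroup.ker_mk', Subgroup.subgroupOf, ← Subgroup.map_le_iff_le_comap,
    Subgroup.top_subtype_lowerCentralSeries]
  exact h

namespace Ideal

variable {R n : Type*} [CommRing R] [Fintype n] [DecidableEq n] {I J : Ideal R}
  {A B : Matrix n n R}

theorem mul_mem_matrix_mul (hA : A ∈ I.matrix n) (hB : B ∈ J.matrix n) :
    A * B ∈ (I * J).matrix n := fun i j =>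
  _root_.sum_mem fun k _ => mul_mem_mul (hA i k) (hB k j)

theorem mul_mem_matrix_right (hA : A ∈ I.matrix n) (B : Matrix n n R) :
    A * B ∈ I.matrix n := fun i _ =>
  _root_.sum_mem fun k _ => I.mul_mem_right _ (hA i k)

end Ideal

namespace Matrix.GeneralLinearGroup

variable {R : Type*} [CommRing R] (n : Type*) [Fintype n] [DecidableEq n]

def congruenceSubgroup (J : Ideal R) : Subgroup (GL n R) :=
  (Units.map (Ideal.Quotient.mk J).mapMatrix.toMonoidHom).ker

instance (J : Ideal R) : (congruenceSubgroup n J).Normal :=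
  MonoidHom.normal_ker _

variable {n}

theorem mem_congruenceSubgroup {J : Ideal R} {u : GL n R} :
    u ∈ congruenceSubgroup n J ↔ (u : Matrix n n R) - 1 ∈ J.matrix n := by
  simp only [congruenceSubgroup, MonoidHom.mem_ker, Units.ext_iff, Units.coe_map, Units.val_one,
    Ideal.mem_matrix, ← Matrix.ext_iff, RingHom.toMonoidHom_eq_coe, MonoidHom.coe_coe,
    RingHom.mapMatrix_apply, map_apply, one_apply, sub_apply]
  refine forall₂_congr fun i j => ?_
  split_ifs
  · rw [← map_one (Ideal.Quotient.mk J), Ideal.Quotient.mk_eq_mk_iff_sub_mem]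
  · rw [sub_zero, Ideal.Quotient.eq_zero_iff_mem]

theorem congruenceSubgroup_mono {J K : Ideal R} (h : J ≤ K) :
    congruenceSubgroup n J ≤ congruenceSubgroup n K := fun _ hu =>
  mem_congruenceSubgroup.2 (Ideal.matrix_monotone n h (mem_congruenceSubgroup.1 hu))

open scoped commutatorElement in
theorem commutator_congruenceSubgroup_le (J K : Ideal R) :
    ⁅congruenceSubgroup n J, congruenceSubgroup n K⁆ ≤ congruenceSubgroup n (J * K) := by
  refine Subgroup.commutator_le.2 fun u hu v hv => mem_congruenceSubgroup.2 ?_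
  have hu' := mem_congruenceSubgroup.1 hu
  have hv' := mem_congruenceSubgroup.1 hv
  have key : ((⁅u, v⁆ : GL n R) : Matrix n n R) - 1 =
      ((u - 1 : Matrix n n R) * (v - 1) - (v - 1) * (u - 1)) *
        ((u⁻¹ : GL n R) * (v⁻¹ : GL n R) : Matrix n n R) := by
    have hvu : (v : Matrix n n R) * u * (u⁻¹ : GL n R) * (v⁻¹ : GL n R) = 1 := by
      simp only [← Units.val_mul, mul_inv_cancel_right, mul_inv_cancel, Units.val_one]
    rw [commutatorElement_def, Units.val_mul, Units.val_mul, Units.val_mul]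
    conv_lhs => rw [← hvu]
    noncomm_ring
  rw [key]
  refine Ideal.mul_mem_matrix_right (sub_mem (Ideal.mul_mem_matrix_mul hu' hv') ?_) _
  rw [mul_comm J]
  exact Ideal.mul_mem_matrix_mul hv' hu'

theorem lowerCentralSeries_congruenceSubgroup_le (I : Ideal R) (k : ℕ) :
    (congruenceSubgroup n I).lowerCentralSeries k ≤ congruenceSubgroup n (I ^ (k + 1)) := by
  induction k with
  | zero => rw [Subgroup.lowerCentralSeries_zero, zero_add, pow_one]
  | succ k ih =>
    rw [Subgroup.lowerCentralSeries_succ, pow_succ _ (k + 1)]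
    exact (Subgroup.commutator_mono ih le_rfl).trans (commutator_congruenceSubgroup_le _ _)

theorem mem_congruenceSubgroup_pow_succ_of_pow_mem {I : Ideal R} {u : GL n R} {m r : ℕ}
    (hm : IsUnit (m : R)) (hr : 1 ≤ r) (hu : u ∈ congruenceSubgroup n (I ^ r))
    (hum : u ^ m ∈ congruenceSubgroup n (I ^ (r + 1))) :
    u ∈ congruenceSubgroup n (I ^ (r + 1)) := by
  rw [mem_congruenceSubgroup] at hu hum ⊢
  set Y := (u : Matrix n n R) - 1
  obtain ⟨Z, hZ⟩ := exists_one_add_pow_eq Y m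
  have hY2 : Z * Y ^ 2 ∈ (I ^ (r + 1)).matrix n := by
    have hYY := Ideal.mul_mem_matrix_mul hu hu
    rw [← pow_add, ← sq] at hYY
    exact Ideal.mul_mem_left _ Z (Ideal.matrix_monotone n (Ideal.pow_le_pow_right (by omega)) hYY)
  have hmY : (m : R) • Y = ((u ^ m : GL n R) : Matrix n n R) - 1 - Z * Y ^ 2 := by
    rw [Units.val_pow_eq_pow_val, ← add_sub_cancel (1 : Matrix n n R) u, hZ,
      Nat.cast_smul_eq_nsmul, nsmul_eq_mul]
    abel
  obtain ⟨c, hc⟩ := hm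
  intro i j
  have hmYij := (sub_mem hum hY2) i j
  rw [← hmY, smul_apply, smul_eq_mul, ← hc] at hmYij
  simpa using (I ^ (r + 1)).mul_mem_left (↑c⁻¹) hmYij

theorem mem_congruenceSubgroup_of_pow_mem {I : Ideal R} {u : GL n R} {m k : ℕ}
    (hm : IsUnit (m : R)) (hu : u ∈ congruenceSubgroup n I)
    (hum : u ^ m ∈ congruenceSubgroup n (I ^ (k + 1))) :
    u ∈ congruenceSubgroup n (I ^ (k + 1)) := by
  suffices ∀ j ≤ k, u ∈ congruenceSubgroup n (I ^ (j + 1)) from this k le_rfl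
  intro j hj
  induction j with
  | zero => rwa [zero_add, pow_one]
  | succ j ih =>
    exact mem_congruenceSubgroup_pow_succ_of_pow_mem hm (Nat.le_add_left 1 j) (ih (by omega))
      (congruenceSubgroup_mono (Ideal.pow_le_pow_right (by omega)) hum)

theorem exists_notMem_congruenceSubgroup_pow {I : Ideal R} (hI : ⨅ i, I ^ i = ⊥) {u : GL n R}
    (hu : u ≠ 1) : ∃ m, u ∉ congruenceSubgroup n (I ^ (m + 1)) := by
  by_contra! h
  have hu' : (u : Matrix n n R) - 1 ∈ (⨅ i, I ^ i).matrix n := fun a b =>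
    Ideal.mem_iInf.2 fun i => Ideal.pow_le_pow_right i.le_succ (mem_congruenceSubgroup.1 (h i) a b)
  rw [hI, Ideal.matrix_bot, Ideal.mem_bot, sub_eq_zero] at hu'
  exact hu (Units.ext hu')

variable (n) in
abbrev congruenceQuotient (I : Ideal R) (k : ℕ) : Type _ :=
  congruenceSubgroup n I ⧸
    (congruenceSubgroup n (I ^ (k + 1))).subgroupOf (congruenceSubgroup n I)

instance (I : Ideal R) (k : ℕ) : Group.IsNilpotent (congruenceQuotient n I k) :=
  Subgroup.isNilpotent_quotient_subgroupOf (lowerCentralSeries_congruenceSubgroup_le I k)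

theorem congruenceQuotient.eq_one_of_isOfFinOrder [Algebra ℚ R] {I : Ideal R} {k : ℕ}
    {q : congruenceQuotient n I k} (hq : IsOfFinOrder q) : q = 1 := by
  obtain ⟨m, hm, hqm⟩ := hq.exists_pow_eq_one
  induction q using QuotientGroup.induction_on with | H u => ?_
  rw [← QuotientGroup.mk_pow, QuotientGroup.eq_one_iff, Subgroup.mem_subgroupOf] at hqm
  rw [QuotientGroup.eq_one_iff, Subgroup.mem_subgroupOf]
  have hmR : IsUnit (m : R) := by
    simpa using (IsUnit.mk0 (m : ℚ) (by positivity)).map (algebraMap ℚ R)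
  exact mem_congruenceSubgroup_of_pow_mem hmR u.2 hqm

end Matrix.GeneralLinearGroup

open Matrix.GeneralLinearGroup in
theorem stmt0_general (k : Type) [Field k] [CharZero k] (N : ℕ)
    (G : Subgroup (GL (Fin N) (PowerSeries k)))
    (hG : ∀ X : GL (Fin N) (PowerSeries k), X ∈ G ↔
      ∀ i j, ((X : Matrix (Fin N) (Fin N) (PowerSeries k)) - 1) i j ∈
        Ideal.span {(PowerSeries.X : PowerSeries k)}) :
    ∀ g : G, g ≠ 1 → ∃ (Q : Type) (_ : Group Q) (π : G →* Q),
      Function.Surjective π ∧ Group.IsNilpotent Q ∧ (∀ q : Q, q ≠ 1 → ¬IsOfFinOrder q) ∧ π g ≠ 1 := by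
  intro g hg
  obtain rfl : G = congruenceSubgroup (Fin N) (IsLocalRing.maximalIdeal (PowerSeries k)) := by
    ext u
    rw [hG, PowerSeries.maximalIdeal_eq_span_X, mem_congruenceSubgroup, Ideal.mem_matrix]
  obtain ⟨m, hm⟩ := exists_notMem_congruenceSubgroup_pow
    (Ideal.iInf_pow_eq_bot_of_isLocalRing _ (IsLocalRing.maximalIdeal.isMaximal _).ne_top)
    (OneMemClass.coe_eq_one.not.2 hg)
  refine ⟨congruenceQuotient (Fin N) _ m, inferInstance, QuotientGroup.mk' _,
    QuotientGroup.mk'_surjective _, inferInstance,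
    fun q hq hfin => hq (congruenceQuotient.eq_one_of_isOfFinOrder hfin), ?_⟩
  rwa [QuotientGroup.mk'_apply, ne_eq, QuotientGroup.eq_one_iff, Subgroup.mem_subgroupOf]

/-- For `k` a field of characteristic 0 and `A = k[[h]]`, the group
`G = {X ∈ GL_N(A) | X ≡ 1 mod h}` is residually torsion-free nilpotent. -/
theorem stmt0 (k : Type) [Field k] [CharZero k] (N : ℕ) (hN : 1 ≤ N)
    (G : Subgroup (GL (Fin N) (PowerSeries k)))
    (hG : ∀ X : GL (Fin N) (PowerSeries k), X ∈ G ↔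
      ∀ i j, ((X : Matrix (Fin N) (Fin N) (PowerSeries k)) - 1) i j ∈
        Ideal.span {(PowerSeries.X : PowerSeries k)}) :
    ∀ g : G, g ≠ 1 → ∃ (Q : Type) (_ : Group Q) (π : G →* Q),
      Function.Surjective π ∧ Group.IsNilpotent Q ∧ (∀ q : Q, q ≠ 1 → ¬IsOfFinOrder q) ∧ π g ≠ 1 :=
  stmt0_general k N G hG
end

section
/- Let F_{n+1} be free on g_1, ..., g_{n+1} and let r : F_{n+1} → F_n be the retraction fixing g_1, ..., g_n and sending g_{n+1} to (g_1 ⋯ g_n)^{-1}. If φ ∈ Aut(F_{n+1}) fixes the product g_1 g_2 ⋯ g_{n+1}, then the map Ψ(φ) : F_n → F_n given by Ψ(φ)(x) = r(φ(x)) (for x ∈ F_n ⊆ F_{n+1}) is an endomorphism of F_n, and φ ↦ Ψ(φ) is multiplicative on the subgroup of such automorphisms. -/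
/-- The inclusion `F_n = ⟨g_1, ..., g_n⟩ ↪ F_{n+1}`. -/
def finc (n : ℕ) : FreeGroup (Fin n) →* FreeGroup (Fin (n + 1)) :=
  FreeGroup.lift fun i => FreeGroup.of i.castSucc

/-- The retraction `r : F_{n+1} → F_n` fixing `g_1, ..., g_n` and sending
`g_{n+1}` to `(g_1 ⋯ g_n)⁻¹`. -/
def fretr (n : ℕ) : FreeGroup (Fin (n + 1)) →* FreeGroup (Fin n) :=
  FreeGroup.lift fun j =>
    if h : (j : ℕ) < n then FreeGroup.of (⟨(j : ℕ), h⟩ : Fin n)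
    else ((List.ofFn fun i : Fin n => FreeGroup.of i).prod)⁻¹

/-- The product `g_1 g_2 ⋯ g_{n+1}` in `F_{n+1}`. -/
def fprod (n : ℕ) : FreeGroup (Fin (n + 1)) :=
  (List.ofFn fun j : Fin (n + 1) => FreeGroup.of j).prod

/-- The map `Ψ(φ) = r ∘ φ ∘ ι : F_n → F_n` induced by `φ ∈ Aut(F_{n+1})`. -/
def ΨMap (n : ℕ) (φ : MulAut (FreeGroup (Fin (n + 1)))) :
    FreeGroup (Fin n) →* FreeGroup (Fin n) :=
  (fretr n).comp (φ.toMonoidHom.comp (finc n))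

/-!
Let `N` be the normal closure of `p = g_1 ⋯ g_{n+1}`. The retraction `r` kills `p`, so `N ≤ ker r`;
conversely `ι ∘ r` is the identity modulo `N`, since `g_{n+1} ≡ (g_1 ⋯ g_n)⁻¹ mod N`.
An endomorphism `φ` fixing `p` preserves `N`, so `r ∘ φ` also kills `N` and therefore
`r ∘ φ ∘ ι ∘ r = r ∘ φ`. Applied to `ψ(ι x)` this is `Ψ(φψ) = Ψ(φ) ∘ Ψ(ψ)`.
-/

theorem Subgroup.normalClosure_singleton_le_comap {G : Type*} [Group G] {g : G} {φ : G →* G}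
    (h : φ g = g) : normalClosure {g} ≤ (normalClosure {g}).comap φ :=
  normalClosure_le_normal <| Set.singleton_subset_iff.2 <| by
    rw [SetLike.mem_coe, mem_comap, h]
    exact subset_normalClosure rfl

section Retraction

variable (n : ℕ)

theorem fretr_comp_finc : (fretr n).comp (finc n) = MonoidHom.id _ := by
  refine FreeGroup.ext_hom _ _ fun i => ?_
  simp [finc, fretr]

theorem fretr_of_last :
    fretr n (FreeGroup.of (Fin.last n)) = (List.ofFn fun i : Fin n => FreeGroup.of i).prod⁻¹ := by
  simp [fretr]

theorem fprod_eq_finc_mul_of_last :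
    fprod n = finc n (List.ofFn fun i : Fin n => FreeGroup.of i).prod * FreeGroup.of (Fin.last n) := by
  rw [fprod, List.ofFn_succ', map_list_prod, List.concat_eq_append, List.prod_append]
  simp [finc, Function.comp_def]

theorem fretr_fprod : fretr n (fprod n) = 1 := by
  rw [fprod_eq_finc_mul_of_last, map_mul, ← MonoidHom.comp_apply, fretr_comp_finc,
    fretr_of_last, MonoidHom.id_apply, mul_inv_cancel]

theorem normalClosure_fprod_le_ker_fretr : Subgroup.normalClosure {fprod n} ≤ (fretr n).ker :=
  Subgroup.normalClosure_le_normal <| Set.singleton_subset_iff.2 (fretr_fprod n)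

theorem mk_finc_fretr (y : FreeGroup (Fin (n + 1))) :
    (finc n (fretr n y) : FreeGroup (Fin (n + 1)) ⧸ Subgroup.normalClosure {fprod n}) = y := by
  suffices h : (QuotientGroup.mk' _).comp ((finc n).comp (fretr n)) =
      QuotientGroup.mk' (Subgroup.normalClosure {fprod n}) from DFunLike.congr_fun h y
  refine FreeGroup.ext_hom _ _ fun j => ?_
  cases j using Fin.lastCases with
  | last =>
    simp only [MonoidHom.comp_apply, fretr_of_last, map_inv, QuotientGroup.mk'_apply]
    rw [← QuotientGroup.mk_inv, QuotientGroup.eq, inv_inv, ← fprod_eq_finc_mul_of_last]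
    exact Subgroup.subset_normalClosure rfl
  | cast i => simp [finc, fretr]

end Retraction

/-- If `φ ∈ Aut(F_{n+1})` fixes the product `g_1 ⋯ g_{n+1}`, then
`Ψ(φ) = r ∘ φ|_{F_n}` is an endomorphism of `F_n` (it is a monoid hom by construction),
and `Ψ` is multiplicative on the stabilizer of the product: `Ψ(φψ) = Ψ(φ) ∘ Ψ(ψ)`. -/
theorem stmt18 (n : ℕ) :
    ∀ φ ψ : MulAut (FreeGroup (Fin (n + 1))),
      φ (fprod n) = fprod n → ψ (fprod n) = fprod n →
      ∀ x : FreeGroup (Fin n), ΨMap n (φ * ψ) x = ΨMap n φ (ΨMap n ψ x) := by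
  intro φ ψ hφ _ x
  have hker : Subgroup.normalClosure {fprod n} ≤ ((fretr n).comp φ.toMonoidHom).ker :=
    (Subgroup.normalClosure_singleton_le_comap hφ).trans
      (Subgroup.comap_mono (normalClosure_fprod_le_ker_fretr n))
  have hmod := QuotientGroup.eq.1 (mk_finc_fretr n (ψ (finc n x)))
  show fretr n (φ (ψ (finc n x))) = fretr n (φ (finc n (fretr n (ψ (finc n x)))))
  exact ((fretr n).comp φ.toMonoidHom).eq_iff.2 (hker hmod)
end
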